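/- There exists a constant C > 0 such that for every Schwartz function f : ℝ² → ℝ, ‖f‖_{L^∞(ℝ²)} ≤ C · (‖f‖_{L²}^{1/2}‖∂₂f‖_{L²}^{1/2} + ‖∂₁f‖_{L²}^{1/2}‖∂₁₂f‖_{L²}^{1/2}). (Two-dimensional anisotropic Agmon-type inequality used in the proof of the appendix lemma.) -/

import Mathlib

open MeasureTheory SchwartzMap

noncomputable section

/-- Partial derivative of a Schwartz function on `ℝ²` in the `i`-th coordinate direction. -/
def pd2 (i : Fin 2) (f : SchwartzMap (EuclideanSpace ℝ (Fin 2)) ℝ) :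
    SchwartzMap (EuclideanSpace ℝ (Fin 2)) ℝ :=
  LineDeriv.lineDerivOpCLM ℝ (SchwartzMap (EuclideanSpace ℝ (Fin 2)) ℝ) (EuclideanSpace.single i (1 : ℝ)) f

/-- The `L²` norm (w.r.t. Lebesgue measure on `ℝ²`). -/
def L2 (f : SchwartzMap (EuclideanSpace ℝ (Fin 2)) ℝ) : ℝ :=
  (eLpNorm f 2 volume).toReal

/-- The `L^∞` (essential supremum) norm on `ℝ²`. -/
def Linf (f : SchwartzMap (EuclideanSpace ℝ (Fin 2)) ℝ) : ℝ :=
  (eLpNorm f ⊤ volume).toReal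

/-! The fundamental theorem of calculus gives `u(a)² ≤ 2 ∫ |u u'|` for a Schwartz function `u`
on `ℝ`, hence `u(a)² ≤ 2 ‖u‖₂ ‖u'‖₂` by Cauchy–Schwarz. On the vertical line through `(x, y)` this
bounds `f(x, y)²` by `2 ‖f(x, ·)‖₂ ‖∂₂f(x, ·)‖₂`. On horizontal lines the first bound, integrated
over the second variable, gives `‖g(x, ·)‖₂² ≤ 2 ∫ |g ∂₁g| ≤ 2 ‖g‖₂ ‖∂₁g‖₂`; take `g = f` and
`g = ∂₂f`. Altogether `f(x, y)² ≤ 4XY ≤ (X + Y)²` with `X = ‖f‖₂^½ ‖∂₂f‖₂^½` and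
`Y = ‖∂₁f‖₂^½ ‖∂₁₂f‖₂^½`, so `C = 1` works. -/

open Filter Topology LineDeriv

section Lebesgue

variable {α : Type*} [MeasurableSpace α] {μ : Measure α}

theorem MeasureTheory.MemLp.toReal_eLpNorm_two_eq {f : α → ℝ} (hf : MemLp f 2 μ) :
    (eLpNorm f 2 μ).toReal = (∫ x, f x ^ 2 ∂μ) ^ (2⁻¹ : ℝ) := by
  rw [hf.eLpNorm_eq_integral_rpow_norm two_ne_zero ENNReal.ofNat_ne_top,
    ENNReal.toReal_ofReal (by positivity)]
  simp only [ENNReal.toReal_ofNat, Real.rpow_two, Real.norm_eq_abs, sq_abs]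

theorem MeasureTheory.MemLp.toReal_eLpNorm_two_sq {f : α → ℝ} (hf : MemLp f 2 μ) :
    (eLpNorm f 2 μ).toReal ^ 2 = ∫ x, f x ^ 2 ∂μ := by
  rw [hf.toReal_eLpNorm_two_eq, ← Real.rpow_natCast, ← Real.rpow_mul (by positivity)]
  norm_num

theorem integral_abs_mul_le_toReal_eLpNorm_two_mul {f g : α → ℝ} (hf : MemLp f 2 μ)
    (hg : MemLp g 2 μ) :
    ∫ x, |f x * g x| ∂μ ≤ (eLpNorm f 2 μ).toReal * (eLpNorm g 2 μ).toReal := by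
  have := integral_mul_norm_le_Lp_mul_Lq Real.HolderConjugate.two_two
    (by simpa using hf) (by simpa using hg)
  simp only [Real.rpow_two, Real.norm_eq_abs, sq_abs, one_div] at this
  rw [hf.toReal_eLpNorm_two_eq, hg.toReal_eLpNorm_two_eq]
  simpa only [abs_mul] using this

theorem toReal_eLpNorm_top_le_of_forall_abs_le [Nonempty α] {f : α → ℝ} {C : ℝ}
    (h : ∀ x, |f x| ≤ C) : (eLpNorm f ⊤ μ).toReal ≤ C := by
  refine ENNReal.toReal_le_of_le_ofReal ((abs_nonneg _).trans (h (Classical.arbitrary α))) ?_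
  rw [eLpNorm_exponent_top]
  exact eLpNormEssSup_le_of_ae_bound (ae_of_all _ h)

end Lebesgue

theorem sq_le_two_mul_integral_abs_mul_of_hasDerivAt {u u' : ℝ → ℝ}
    (hu : ∀ t, HasDerivAt u (u' t) t) (hlim : Tendsto u atBot (𝓝 0))
    (hint : Integrable fun t ↦ u t * u' t) (a : ℝ) :
    u a ^ 2 ≤ 2 * ∫ t, |u t * u' t| := by
  have hsq : ∀ t ∈ Set.Iic a, HasDerivAt (fun s ↦ u s ^ 2) (2 * (u t * u' t)) t := fun t _ ↦ by
    simpa [mul_comm, mul_assoc, mul_left_comm] using (hu t).fun_pow 2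
  calc u a ^ 2 = ∫ t in Set.Iic a, 2 * (u t * u' t) := by
        rw [← sub_zero (u a ^ 2)]
        exact (integral_Iic_of_hasDerivAt_of_tendsto' hsq (hint.const_mul 2).integrableOn
          (by simpa using hlim.pow 2)).symm
    _ ≤ ∫ t in Set.Iic a, 2 * |u t * u' t| :=
        setIntegral_mono (hint.const_mul 2).integrableOn (hint.abs.const_mul 2).integrableOn
          fun t ↦ by gcongr; exact le_abs_self _
    _ ≤ ∫ t, 2 * |u t * u' t| :=
        setIntegral_le_integral (hint.abs.const_mul 2) (ae_of_all _ fun t ↦ by positivity)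
    _ = 2 * ∫ t, |u t * u' t| := integral_const_mul 2 _

theorem abs_le_of_sq_le_two_mul {c a b α β γ δ : ℝ} (hα : 0 ≤ α) (hβ : 0 ≤ β) (hγ : 0 ≤ γ)
    (hδ : 0 ≤ δ) (hc : c ^ 2 ≤ 2 * (a * b)) (ha : a ^ 2 ≤ 2 * (α * β))
    (hb : b ^ 2 ≤ 2 * (γ * δ)) :
    |c| ≤ α ^ (1 / 2 : ℝ) * γ ^ (1 / 2 : ℝ) + β ^ (1 / 2 : ℝ) * δ ^ (1 / 2 : ℝ) := by
  simp only [← Real.sqrt_eq_rpow]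
  set X := √α * √γ
  set Y := √β * √δ
  have hXY : (2 * (X * Y)) ^ 2 = (2 * (α * β)) * (2 * (γ * δ)) := by
    simp only [X, Y, mul_pow, Real.sq_sqrt, *]; ring
  have hab : a * b ≤ 2 * (X * Y) := by
    refine (le_abs_self _).trans (abs_le_of_sq_le_sq ?_ (by positivity))
    rw [hXY, mul_pow]
    exact mul_le_mul ha hb (by positivity) (by positivity)
  refine abs_le_of_sq_le_sq ?_ (by positivity)
  nlinarith [sq_nonneg (X - Y)]

section Line

variable {E F : Type*} [NormedAddCommGroup E] [NormedSpace ℝ E] [NormedAddCommGroup F]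
  [NormedSpace ℝ F]

theorem Function.hasTemperateGrowth_const_add_smul (p v : E) :
    (fun s : ℝ ↦ p + s • v).HasTemperateGrowth :=
  (Function.HasTemperateGrowth.const p).add
    (ContinuousLinearMap.toSpanSingleton ℝ v).hasTemperateGrowth

theorem antilipschitzWith_const_add_smul (p : E) {v : E} (hv : v ≠ 0) :
    AntilipschitzWith ‖v‖₊⁻¹ fun s : ℝ ↦ p + s • v :=
  AntilipschitzWith.of_le_mul_dist fun s t ↦ by
    rw [dist_eq_norm, dist_eq_norm, add_sub_add_left_eq_sub, ← sub_smul, norm_smul,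
      NNReal.coe_inv, coe_nnnorm]
    exact le_of_eq (by field_simp [norm_ne_zero_iff.2 hv])

namespace SchwartzMap

def compLine (p v : E) (hv : v ≠ 0) : 𝓢(E, F) →L[ℝ] 𝓢(ℝ, F) :=
  compCLMOfAntilipschitz ℝ (Function.hasTemperateGrowth_const_add_smul p v)
    (antilipschitzWith_const_add_smul p hv)

@[simp]
theorem compLine_apply (p v : E) (hv : v ≠ 0) (f : 𝓢(E, F)) (s : ℝ) :
    compLine p v hv f s = f (p + s • v) := rfl

theorem hasDerivAt_compLine (p v : E) (hv : v ≠ 0) (f : 𝓢(E, F)) (s : ℝ) :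
    HasDerivAt (compLine p v hv f) (compLine p v hv (∂_{v} f) s) s := by
  have hline : HasDerivAt (fun s : ℝ ↦ p + s • v) v s := by
    simpa using ((hasDerivAt_id s).smul_const v).const_add p
  exact (f.hasFDerivAt _).comp_hasDerivAt s hline

theorem sq_compLine_le_two_mul_integral (p v : E) (hv : v ≠ 0) (f : 𝓢(E, ℝ)) (a : ℝ) :
    compLine p v hv f a ^ 2 ≤ 2 * ∫ s, |compLine p v hv f s * compLine p v hv (∂_{v} f) s| :=
  sq_le_two_mul_integral_abs_mul_of_hasDerivAt (hasDerivAt_compLine p v hv f)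
    ((compLine p v hv f).tendsto_cocompact.mono_left atBot_le_cocompact)
    (((compLine p v hv f).memLp 2).integrable_mul ((compLine p v hv (∂_{v} f)).memLp 2)) a

theorem sq_compLine_le_two_mul_eLpNorm (p v : E) (hv : v ≠ 0) (f : 𝓢(E, ℝ)) (a : ℝ) :
    compLine p v hv f a ^ 2 ≤ 2 * ((eLpNorm (compLine p v hv f) 2 volume).toReal *
      (eLpNorm (compLine p v hv (∂_{v} f)) 2 volume).toReal) :=
  (sq_compLine_le_two_mul_integral p v hv f a).trans <| by
    gcongr
    exact integral_abs_mul_le_toReal_eLpNorm_two_mul ((compLine p v hv f).memLp 2)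
      ((compLine p v hv (∂_{v} f)).memLp 2)

end SchwartzMap

end Line

local notation "ℝ²" => EuclideanSpace ℝ (Fin 2)

def planeCoords : ℝ × ℝ ≃ᵐ ℝ² :=
  MeasurableEquiv.finTwoArrow.symm.trans (MeasurableEquiv.toLp 2 (Fin 2 → ℝ))

theorem measurePreserving_planeCoords : MeasurePreserving planeCoords :=
  (EuclideanSpace.volume_preserving_symm_measurableEquiv_toLp (Fin 2)).symm.comp
    (volume_preserving_finTwoArrow ℝ).symm

theorem planeCoords_apply (x y : ℝ) :
    planeCoords (x, y) = x • EuclideanSpace.single 0 1 + y • EuclideanSpace.single 1 1 := by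
  ext j
  fin_cases j <;> simp [planeCoords, MeasurableEquiv.finTwoArrow]

def horizontalLine (y : ℝ) : 𝓢(ℝ², ℝ) →L[ℝ] 𝓢(ℝ, ℝ) :=
  compLine (planeCoords (0, y)) (EuclideanSpace.single 0 1) (by simp)

def verticalLine (x : ℝ) : 𝓢(ℝ², ℝ) →L[ℝ] 𝓢(ℝ, ℝ) :=
  compLine (planeCoords (x, 0)) (EuclideanSpace.single 1 1) (by simp)

theorem horizontalLine_apply (y s : ℝ) (g : 𝓢(ℝ², ℝ)) :
    horizontalLine y g s = g (planeCoords (s, y)) := by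
  simp only [horizontalLine, compLine_apply, planeCoords_apply]; congr 1; module

theorem verticalLine_apply (x t : ℝ) (g : 𝓢(ℝ², ℝ)) :
    verticalLine x g t = g (planeCoords (x, t)) := by
  simp only [verticalLine, compLine_apply, planeCoords_apply]; congr 1; module

theorem sq_horizontalLine_le (g : 𝓢(ℝ², ℝ)) (y s : ℝ) :
    horizontalLine y g s ^ 2 ≤
      2 * ∫ s', |horizontalLine y g s' * horizontalLine y (pd2 0 g) s'| :=
  sq_compLine_le_two_mul_integral _ _ _ g s

theorem sq_verticalLine_le (g : 𝓢(ℝ², ℝ)) (x t : ℝ) :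
    verticalLine x g t ^ 2 ≤ 2 * ((eLpNorm (verticalLine x g) 2 volume).toReal *
      (eLpNorm (verticalLine x (pd2 1 g)) 2 volume).toReal) :=
  sq_compLine_le_two_mul_eLpNorm _ _ _ g t

theorem sq_toReal_eLpNorm_verticalLine_le (g : 𝓢(ℝ², ℝ)) (x : ℝ) :
    (eLpNorm (verticalLine x g) 2 volume).toReal ^ 2 ≤ 2 * (L2 g * L2 (pd2 0 g)) := by
  have hsq := ((verticalLine x g).memLp 2).toReal_eLpNorm_two_sq
  set F : ℝ² → ℝ := fun z ↦ |g z * pd2 0 g z|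
  have hF : Integrable F := ((g.memLp 2).integrable_mul ((pd2 0 g).memLp 2)).abs
  have hFc : Integrable (F ∘ planeCoords) :=
    (measurePreserving_planeCoords.integrable_comp_emb planeCoords.measurableEmbedding).2 hF
  have hslice (t : ℝ) : verticalLine x g t ^ 2 ≤ 2 * ∫ s, F (planeCoords (s, t)) := by
    simpa only [horizontalLine_apply, verticalLine_apply] using sq_horizontalLine_le g t x
  calc (eLpNorm (verticalLine x g) 2 volume).toReal ^ 2 = ∫ t, verticalLine x g t ^ 2 := hsq
    _ ≤ ∫ t, 2 * ∫ s, F (planeCoords (s, t)) :=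
        integral_mono ((verticalLine x g).memLp 2).integrable_sq
          (hFc.integral_prod_right.const_mul 2) hslice
    _ = 2 * ∫ z, F z := by
        rw [integral_const_mul, ← measurePreserving_planeCoords.integral_comp
          planeCoords.measurableEmbedding]
        exact congrArg (2 * ·) (integral_prod_symm _ hFc).symm
    _ ≤ 2 * (L2 g * L2 (pd2 0 g)) := by
        gcongr
        exact integral_abs_mul_le_toReal_eLpNorm_two_mul (g.memLp 2) ((pd2 0 g).memLp 2)

/-- Two-dimensional anisotropic Agmon-type inequality:
`‖f‖_{L^∞(ℝ²)} ≲ ‖f‖^{1/2}‖∂₂f‖^{1/2} + ‖∂₁f‖^{1/2}‖∂₁₂f‖^{1/2}`. -/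
theorem anisotropic_agmon_2d :
    ∃ C : ℝ, 0 < C ∧ ∀ f : SchwartzMap (EuclideanSpace ℝ (Fin 2)) ℝ,
      Linf f ≤ C * (L2 f ^ (1/2 : ℝ) * L2 (pd2 1 f) ^ (1/2 : ℝ) +
        L2 (pd2 0 f) ^ (1/2 : ℝ) * L2 (pd2 0 (pd2 1 f)) ^ (1/2 : ℝ)) := by
  refine ⟨1, one_pos, fun f ↦ ?_⟩
  rw [one_mul]
  refine toReal_eLpNorm_top_le_of_forall_abs_le fun z ↦ ?_
  obtain ⟨⟨x, y⟩, rfl⟩ := planeCoords.surjective z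
  rw [← verticalLine_apply]
  exact abs_le_of_sq_le_two_mul ENNReal.toReal_nonneg ENNReal.toReal_nonneg
    ENNReal.toReal_nonneg ENNReal.toReal_nonneg (sq_verticalLine_le f x y)
    (sq_toReal_eLpNorm_verticalLine_le f x) (sq_toReal_eLpNorm_verticalLine_le (pd2 1 f) x)

end
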